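/- arXiv:2601.14061 — 2 statements merged into one kernel-verified Lean document; each statement's English description precedes it below -/
import Mathlib

section
/- Let μ be a compactly supported Borel probability measure on SL(2,ℝ). For every α ∈ A and all 0 ≤ γ′ ≤ γ ≤ 2: I_γ(α) ≤ I_{γ′}(α) ≤ I_γ(α) + (γ − γ′)α. -/
open MeasureTheory Filter Topology
open scoped ENNReal

noncomputable section

abbrev SL2 : Type := Matrix.SpecialLinearGroup (Fin 2) ℝ
abbrev V2 : Type := EuclideanSpace ℝ (Fin 2)
abbrev P1 : Type := Projectivization ℝ V2

instance : TopologicalSpace SL2 :=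
  inferInstanceAs (TopologicalSpace {A : Matrix (Fin 2) (Fin 2) ℝ // A.det = 1})
instance : MeasurableSpace SL2 := borel SL2
instance : BorelSpace SL2 := ⟨rfl⟩
instance : TopologicalSpace P1 :=
  inferInstanceAs (TopologicalSpace (Quotient (projectivizationSetoid ℝ V2)))
instance : MeasurableSpace P1 := borel P1
instance : BorelSpace P1 := ⟨rfl⟩

def gnorm (g : SL2) : ℝ := ‖Matrix.toEuclideanCLM (𝕜 := ℝ) (g : Matrix (Fin 2) (Fin 2) ℝ)‖

def gvec (g : SL2) (u : V2) : V2 :=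
  Matrix.toEuclideanCLM (𝕜 := ℝ) (g : Matrix (Fin 2) (Fin 2) ℝ) u

lemma gvec_mul (g h : SL2) (u : V2) : gvec g (gvec h u) = gvec (g * h) u := by
  simp [gvec, Matrix.SpecialLinearGroup.coe_mul, map_mul, ContinuousLinearMap.mul_apply]

lemma gvec_one (u : V2) : gvec 1 u = u := by
  simp [gvec]

lemma gvec_ne_zero (g : SL2) {u : V2} (hu : u ≠ 0) : gvec g u ≠ 0 := by
  intro h
  apply hu
  have h2 := congrArg (gvec g⁻¹) h
  rw [gvec_mul, inv_mul_cancel, gvec_one] at h2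
  rw [h2]
  simp [gvec]

def pact (g : SL2) (x : P1) : P1 :=
  Projectivization.mk ℝ (gvec g x.rep) (gvec_ne_zero g x.rep_nonzero)

def dP (x y : P1) : ℝ :=
  |x.rep 0 * y.rep 1 - x.rep 1 * y.rep 0| / (‖x.rep‖ * ‖y.rep‖)

def gxnorm (g : SL2) (x : P1) : ℝ := ‖gvec g x.rep‖ / ‖x.rep‖

def pInner (x y : P1) : ℝ := |(inner ℝ x.rep y.rep : ℝ)| / (‖x.rep‖ * ‖y.rep‖)

/-- The (topological) support of a measure. -/
def msupp (μ : Measure SL2) : Set SL2 :=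
  {g | ∀ U : Set SL2, IsOpen U → g ∈ U → 0 < μ U}

def IsCompactlySupported (μ : Measure SL2) : Prop :=
  ∃ K : Set SL2, IsCompact K ∧ μ Kᶜ = 0

/-- The closed semigroup generated by the support of `μ`. -/
def Smu (μ : Measure SL2) : Set SL2 :=
  closure ((Subsemigroup.closure (msupp μ) : Subsemigroup SL2) : Set SL2)

def StronglyIrreducible (μ : Measure SL2) : Prop :=
  ¬ ∃ F : Finset P1, F.Nonempty ∧ ∀ g ∈ Smu μ, ∀ x ∈ F, pact g x ∈ F

def Proximal (μ : Measure SL2) : Prop :=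
  ∃ g ∈ Smu μ, 2 < |Matrix.trace (g : Matrix (Fin 2) (Fin 2) ℝ)|

def SIP (μ : Measure SL2) : Prop := StronglyIrreducible μ ∧ Proximal μ

/-- `convPow μ n` is the `n`-th convolution power `μⁿ`. -/
def convPow (μ : Measure SL2) : ℕ → Measure SL2
  | 0 => Measure.dirac 1
  | n + 1 => Measure.map (fun p : SL2 × SL2 => p.1 * p.2) ((convPow μ n).prod μ)

def IsOmegaMinus (ω : SL2 → P1) : Prop :=
  ∀ g : SL2, 1 < gnorm g → gxnorm g (ω g) = (gnorm g)⁻¹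

def IsUpsilonPlus (υ : SL2 → P1) : Prop :=
  ∀ g : SL2, 1 < gnorm g⁻¹ → gxnorm g⁻¹ (υ g) = (gnorm g⁻¹)⁻¹

def Eball (α ε : ℝ) (n : ℕ) : Set SL2 :=
  {g | |(n : ℝ)⁻¹ * Real.log (gnorm g) - α| ≤ ε}

def Egam (ω : SL2 → P1) (γ α ε : ℝ) (n : ℕ) (x : P1) : Set SL2 :=
  {g | g ∈ Eball α ε n ∧ dP x (ω g) ≤ Real.exp (-(n : ℝ) * (γ - ε) * α)}

def EgamStar (υ : SL2 → P1) (α ε : ℝ) (n : ℕ) (x : P1) : Set SL2 :=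
  {g | g ∈ Eball α ε n ∧ dP x (υ g) ≤ Real.exp (-(n : ℝ) * (2 - ε) * α)}

def Etilde (ω : SL2 → P1) (γ α ε : ℝ) (n : ℕ) (x : P1) : Set SL2 :=
  if γ < 2 then
    {g | g ∈ Eball α ε n ∧ Real.exp (-(n : ℝ) * (γ + ε) * α) ≤ dP x (ω g) ∧
      dP x (ω g) ≤ Real.exp (-(n : ℝ) * (γ - ε) * α)}
  else Egam ω 2 α ε n x

def IfinN (μ : Measure SL2) (ω : SL2 → P1) (γ α ε : ℝ) (n : ℕ) : EReal :=
  (((n : ℝ)⁻¹ : ℝ) : EReal) * ENNReal.log (⨆ x : P1, convPow μ n (Egam ω γ α ε n x))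

def Ieps (μ : Measure SL2) (ω : SL2 → P1) (γ α ε : ℝ) : EReal :=
  Filter.atTop.limsup (fun n => IfinN μ ω γ α ε n)

def Ifinal (μ : Measure SL2) (ω : SL2 → P1) (γ α : ℝ) : EReal :=
  ⨅ (ε : ℝ) (_ : 0 < ε), Ieps μ ω γ α ε

def Aset (μ : Measure SL2) (ω : SL2 → P1) : Set ℝ :=
  {α : ℝ | Ifinal μ ω 0 α ≠ ⊥}

def I2starEps (μ : Measure SL2) (υ : SL2 → P1) (α ε : ℝ) : EReal :=
  Filter.atTop.limsup (fun n : ℕ =>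
    (((n : ℝ)⁻¹ : ℝ) : EReal) * ENNReal.log (⨆ x : P1, convPow μ n (EgamStar υ α ε n x)))

def I2star (μ : Measure SL2) (υ : SL2 → P1) (α : ℝ) : EReal :=
  ⨅ (ε : ℝ) (_ : 0 < ε), I2starEps μ υ α ε

def kSeq (μ : Measure SL2) (t : ℝ) (n : ℕ) : ℝ :=
  (n : ℝ)⁻¹ * Real.log (∫ g, gnorm g ^ t ∂ convPow μ n)

/-- `k : ℝ → ℝ` is the limit defining `k(t)`. -/
def KTendsto (μ : Measure SL2) (k : ℝ → ℝ) : Prop :=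
  ∀ t : ℝ, Filter.Tendsto (fun n => kSeq μ t n) Filter.atTop (nhds (k t))

def kplusSeq (μ : Measure SL2) (t : ℝ) (n : ℕ) : ℝ :=
  (n : ℝ)⁻¹ * Real.log (⨆ x : P1, ∫ g, gxnorm g x ^ t ∂ convPow μ n)

def kplus (μ : Measure SL2) (t : ℝ) : ℝ :=
  Filter.atTop.limsup (fun n => kplusSeq μ t n)

def sup2 (μ : Measure SL2) (ω : SL2 → P1) (t : ℝ) : EReal :=
  ⨆ α ∈ Aset μ ω, (Ifinal μ ω 2 α + ((-(t * α) : ℝ) : EReal))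

def tc (μ : Measure SL2) (ω : SL2 → P1) (k : ℝ → ℝ) : ℝ :=
  sInf {t : ℝ | sup2 μ ω t < ((k t : ℝ) : EReal)}

def zetat (μ : Measure SL2) (ω : SL2 → P1) (k : ℝ → ℝ) (t : ℝ) : ℝ :=
  sSup {ζ : ℝ |
    (⨆ α ∈ Aset μ ω, (Ifinal μ ω 2 α + ((-(t * α) + 2 * ζ * α : ℝ) : EReal)))
      < ((k t : ℝ) : EReal)}

def Pt (μ : Measure SL2) (t : ℝ) (ψ : P1 → ℝ) : P1 → ℝ :=
  fun x => ∫ g, gxnorm g x ^ t * ψ (pact g x) ∂μ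

def sl2transpose (g : SL2) : SL2 :=
  ⟨Matrix.transpose (g : Matrix (Fin 2) (Fin 2) ℝ), by rw [Matrix.det_transpose]; exact g.2⟩

def PtStar (μ : Measure SL2) (t : ℝ) (ψ : P1 → ℝ) : P1 → ℝ :=
  fun w => ∫ g, gxnorm (sl2transpose g) w ^ t * ψ (pact (sl2transpose g) w) ∂μ

def BoundedFn (f : P1 → ℝ) : Prop := ∃ M : ℝ, ∀ x, |f x| ≤ M

def IsEigenMeas (μ : Measure SL2) (t : ℝ) (ν : Measure P1) (c : ℝ) : Prop :=
  ∀ f : P1 → ℝ, Measurable f → BoundedFn f →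
    ∫ x, Pt μ t f x ∂ν = c * ∫ x, f x ∂ν

def IsEigenMeasStar (μ : Measure SL2) (t : ℝ) (ν : Measure P1) (c : ℝ) : Prop :=
  ∀ f : P1 → ℝ, Measurable f → BoundedFn f →
    ∫ x, PtStar μ t f x ∂ν = c * ∫ x, f x ∂ν

def IsFurstenberg (μ : Measure SL2) (ν : Measure P1) : Prop :=
  IsProbabilityMeasure ν ∧ ∀ f : P1 → ℝ, Measurable f → BoundedFn f →
    ∫ g, (∫ x, f (pact g x) ∂ν) ∂μ = ∫ x, f x ∂ν

def HolderWithC (C ζ : ℝ) (f : P1 → ℝ) : Prop :=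
  ∀ x y : P1, |f x - f y| ≤ C * dP x y ^ ζ

def HolderFn (ζ : ℝ) (f : P1 → ℝ) : Prop := ∃ C : ℝ, HolderWithC C ζ f

def hSemi (ζ : ℝ) (f : P1 → ℝ) : ℝ :=
  sSup {c : ℝ | ∃ x y : P1, x ≠ y ∧ c = |f x - f y| / dP x y ^ ζ}

def supNorm (f : P1 → ℝ) : ℝ := ⨆ x : P1, |f x|

def hNorm (ζ : ℝ) (f : P1 → ℝ) : ℝ := hSemi ζ f + supNorm f

def frostman (ν : Measure P1) : ℝ :=
  sSup {s : ℝ | 0 ≤ s ∧ ∃ C : ℝ, 0 < C ∧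
    ∀ x : P1, ∀ r : ℝ, 0 < r → (ν {y | dP x y ≤ r}).toReal ≤ C * r ^ s}

def rotSL (θ : ℝ) : SL2 :=
  ⟨!![Real.cos θ, -Real.sin θ; Real.sin θ, Real.cos θ], by
    simp [Matrix.det_fin_two_of]
    ring_nf
    rw [← Real.sin_sq_add_cos_sq θ]
    ring⟩

def IsRotInvariant (lam : Measure P1) : Prop :=
  IsProbabilityMeasure lam ∧ ∀ θ : ℝ, Measure.map (pact (rotSL θ)) lam = lam

def riesz (t : ℝ) (ν : Measure P1) (x : P1) : ℝ≥0∞ :=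
  ∫⁻ y, ENNReal.ofReal (dP x y) ^ t ∂ν

/-!
Since `‖g‖ ≥ 1` on `SL(2,ℝ)`, the sets `E(α,ε,n)` are empty for `α < 0` and small `ε`, so every
`α ∈ A` is nonnegative; for such `α` the radius `e^{-n(γ-ε)α}` decreases in `γ`, which gives the
first inequality. For the second, parametrize `P` by angles: the lines of angles `a` and `b` are
at distance `|sin (b - a)|`, so by Jordan's inequality `2|t|/π ≤ |sin t|` a `d_P`-ball of radius `R`
is covered by at most `πR/R' + 5` balls of radius `R'`. With `R/R' = e^{n(γ-γ')α}` this gives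
`sup_x μⁿ(E_{γ'}(x)) ≤ (π + 5) e^{n(γ-γ')α} sup_x μⁿ(E_γ(x))`, and the constant `π + 5` is lost
after taking `(1/n) log` and letting `n → ∞`.
-/

open Real

def unitVec (θ : ℝ) : V2 := !₂[cos θ, sin θ]

lemma norm_unitVec (θ : ℝ) : ‖unitVec θ‖ = 1 := by
  simp [unitVec, EuclideanSpace.norm_eq, Fin.sum_univ_two]

def lineOfAngle (θ : ℝ) : P1 :=
  Projectivization.mk ℝ (unitVec θ) (norm_ne_zero_iff.1 (by rw [norm_unitVec]; exact one_ne_zero))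

lemma dP_mk {u v : V2} (hu : u ≠ 0) (hv : v ≠ 0) :
    dP (Projectivization.mk ℝ u hu) (Projectivization.mk ℝ v hv)
      = |u 0 * v 1 - u 1 * v 0| / (‖u‖ * ‖v‖) := by
  obtain ⟨a, ha⟩ := Projectivization.exists_smul_eq_mk_rep ℝ u hu
  obtain ⟨b, hb⟩ := Projectivization.exists_smul_eq_mk_rep ℝ v hv
  rw [dP, ← ha, ← hb, Units.smul_def, Units.smul_def]
  simp only [PiLp.smul_apply, smul_eq_mul, norm_smul, Real.norm_eq_abs]
  rw [show (a : ℝ) * u 0 * (b * v 1) - a * u 1 * (b * v 0) = (a * b) * (u 0 * v 1 - u 1 * v 0) by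
    ring, abs_mul, abs_mul (a : ℝ), mul_mul_mul_comm |(a : ℝ)|,
    mul_div_mul_left _ _ (mul_ne_zero (abs_ne_zero.2 a.ne_zero) (abs_ne_zero.2 b.ne_zero))]

lemma dP_lineOfAngle (a b : ℝ) : dP (lineOfAngle a) (lineOfAngle b) = |sin (b - a)| := by
  rw [lineOfAngle, lineOfAngle, dP_mk, norm_unitVec, norm_unitVec, mul_one, div_one, sin_sub]
  simp only [unitVec, PiLp.toLp_apply, Matrix.cons_val_zero, Matrix.cons_val_one]
  ring_nf

lemma exists_lineOfAngle_eq (x : P1) : ∃ θ, lineOfAngle θ = x := by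
  set z : ℂ := ⟨x.rep 0, x.rep 1⟩
  have hz : z ≠ 0 := fun h => x.rep_nonzero (by
    ext i; fin_cases i
    exacts [congrArg Complex.re h, congrArg Complex.im h])
  refine ⟨z.arg, ?_⟩
  conv_rhs => rw [← Projectivization.mk_rep x]
  refine (Projectivization.mk_eq_mk_iff' ℝ _ _ _ x.rep_nonzero).2 ⟨‖z‖⁻¹, ?_⟩
  have hn : ‖z‖ ≠ 0 := norm_ne_zero_iff.2 hz
  ext i; fin_cases i
  · simp [unitVec, Complex.cos_arg hz, z]; field_simp
  · simp [unitVec, Complex.sin_arg, z]; field_simp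

lemma exists_lineOfAngle_dP_le {R R' : ℝ} (hR' : 0 < R') {N : ℕ}
    (hN : π / 2 * R / R' + 1 ≤ N) (a : ℝ) {y : P1} (hy : dP (lineOfAngle a) y ≤ R) :
    ∃ j ∈ Finset.Icc (-(N : ℤ)) N, dP (lineOfAngle (a + j * R')) y ≤ R' := by
  obtain ⟨b, rfl⟩ := exists_lineOfAngle_eq y
  rw [dP_lineOfAngle] at hy
  -- `dP` only sees the angle modulo `π`, so reduce `b - a` into `[-π/2, π/2]`
  set m := round ((b - a) / π)
  set ψ := b - a - m * π
  have hψ : |ψ| ≤ π / 2 := by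
    have h := abs_sub_round ((b - a) / π)
    rw [show ψ = π * ((b - a) / π - m) by field_simp; ring, abs_mul, abs_of_pos pi_pos]
    linarith [mul_le_mul_of_nonneg_left h pi_pos.le]
  have habs_sin (t : ℝ) (k : ℤ) : |sin (t - k * π)| = |sin t| := by
    rw [sin_sub_int_mul_pi, abs_mul, abs_neg_one_zpow, one_mul]
  have hψR : |ψ| ≤ π / 2 * R := by
    have h := mul_abs_le_abs_sin hψ
    rw [habs_sin] at h
    rw [show |ψ| = π / 2 * (2 / π * |ψ|) by field_simp]
    gcongr
    exact h.trans hy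
  set j := round (ψ / R')
  have hj : |ψ / R' - j| ≤ 1 / 2 := abs_sub_round _
  have hψR' : |ψ / R'| ≤ π / 2 * R / R' := by
    rw [abs_div, abs_of_pos hR']
    gcongr
  obtain ⟨hj₁, hj₂⟩ := abs_le.1 hj
  obtain ⟨hψ₁, hψ₂⟩ := abs_le.1 hψR'
  refine ⟨j, Finset.mem_Icc.2 ⟨?_, ?_⟩, ?_⟩
  · exact_mod_cast (by linarith : -(N : ℝ) ≤ j)
  · exact_mod_cast (by linarith : (j : ℝ) ≤ N)
  · rw [dP_lineOfAngle, show b - (a + j * R') = (ψ - j * R') + m * π by ring, ← sub_neg_eq_add,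
      ← neg_mul, ← Int.cast_neg, habs_sin]
    calc |sin (ψ - j * R')| ≤ |ψ - j * R'| := abs_sin_le_abs
      _ = R' * |ψ / R' - j| := by
        rw [show ψ - j * R' = R' * (ψ / R' - j) by field_simp, abs_mul, abs_of_pos hR']
      _ ≤ R' * (1 / 2) := by gcongr
      _ ≤ R' := by linarith

lemma exists_finset_dP_cover (x : P1) {R R' : ℝ} (hR : 0 ≤ R) (hR' : 0 < R') :
    ∃ F : Finset P1, (F.card : ℝ) ≤ π * R / R' + 5 ∧
      ∀ y, dP x y ≤ R → ∃ z ∈ F, dP z y ≤ R' := by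
  classical
  obtain ⟨a, rfl⟩ := exists_lineOfAngle_eq x
  set N := ⌈π / 2 * R / R'⌉₊ + 1
  have hN : π / 2 * R / R' + 1 ≤ N := by
    push_cast [N]
    linarith [Nat.le_ceil (π / 2 * R / R')]
  refine ⟨(Finset.Icc (-(N : ℤ)) N).image fun j : ℤ => lineOfAngle (a + j * R'), ?_, ?_⟩
  · have hcard : ((Finset.Icc (-(N : ℤ)) N).card : ℝ) = 2 * N + 1 := by
      rw [Int.card_Icc, show (N : ℤ) + 1 - -N = 2 * N + 1 by ring]
      norm_cast
    have hceil := Nat.ceil_lt_add_one (by positivity : 0 ≤ π / 2 * R / R')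
    calc ((Finset.image _ _).card : ℝ) ≤ (Finset.Icc (-(N : ℤ)) N).card := by
          exact_mod_cast Finset.card_image_le
      _ ≤ π * R / R' + 5 := by
          rw [hcard, show π * R / R' = 2 * (π / 2 * R / R') by ring]
          push_cast [N]
          linarith
  · intro y hy
    obtain ⟨j, hj, hjy⟩ := exists_lineOfAngle_dP_le hR' hN a hy
    exact ⟨_, Finset.mem_image_of_mem _ hj, hjy⟩

lemma abs_cross_le_norm_mul_norm (u v : V2) : |u 0 * v 1 - u 1 * v 0| ≤ ‖u‖ * ‖v‖ := by
  have hu : ‖u‖ ^ 2 = u 0 ^ 2 + u 1 ^ 2 := by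
    simp [EuclideanSpace.real_norm_sq_eq, Fin.sum_univ_two]
  have hv : ‖v‖ ^ 2 = v 0 ^ 2 + v 1 ^ 2 := by
    simp [EuclideanSpace.real_norm_sq_eq, Fin.sum_univ_two]
  -- Lagrange's identity: `(u × v)² + ⟪u, v⟫² = ‖u‖²‖v‖²`
  refine abs_le_of_sq_le_sq ?_ (by positivity)
  nlinarith [sq_nonneg (u 0 * v 0 + u 1 * v 1)]

lemma gvec_single_apply (g : SL2) (i j : Fin 2) :
    gvec g (EuclideanSpace.single j 1) i = (g : Matrix (Fin 2) (Fin 2) ℝ) i j := by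
  change (g : Matrix (Fin 2) (Fin 2) ℝ).mulVec (EuclideanSpace.single j 1) i = _
  simp [Matrix.mulVec, dotProduct]

lemma norm_gvec_le_gnorm (g : SL2) (u : V2) : ‖gvec g u‖ ≤ gnorm g * ‖u‖ :=
  (Matrix.toEuclideanCLM (𝕜 := ℝ) (g : Matrix (Fin 2) (Fin 2) ℝ)).le_opNorm u

lemma one_le_gnorm (g : SL2) : 1 ≤ gnorm g := by
  set u := gvec g (EuclideanSpace.single 0 1)
  set v := gvec g (EuclideanSpace.single 1 1)
  have hdet : u 0 * v 1 - u 1 * v 0 = 1 := by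
    have h := g.2
    rw [Matrix.det_fin_two] at h
    simp only [u, v, gvec_single_apply]
    linarith
  have hu : ‖u‖ ≤ gnorm g := by simpa using norm_gvec_le_gnorm g (EuclideanSpace.single 0 1)
  have hv : ‖v‖ ≤ gnorm g := by simpa using norm_gvec_le_gnorm g (EuclideanSpace.single 1 1)
  have h := abs_cross_le_norm_mul_norm u v
  rw [hdet, abs_one] at h
  have hg : 0 ≤ gnorm g := norm_nonneg _
  nlinarith [mul_le_mul hu hv (norm_nonneg v) hg]

section GrowthRates

variable (μ : Measure SL2) (ω : SL2 → P1) {γ' γ α : ℝ}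

lemma Ifinal_eq_bot_of_neg (γ : ℝ) (hα : α < 0) : Ifinal μ ω γ α = ⊥ := by
  have hIfinN : ∀ᶠ n in atTop, IfinN μ ω γ α (-α / 2) n = ⊥ := by
    filter_upwards [eventually_gt_atTop 0] with n hn
    -- `‖g‖ ≥ 1`, so no `g` has `(1/n) log ‖g‖` within `-α/2` of `α < 0`
    have hempty (x : P1) : Egam ω γ α (-α / 2) n x = ∅ :=
      Set.eq_empty_of_forall_notMem fun g hg => by
        have h : |(n : ℝ)⁻¹ * Real.log (gnorm g) - α| ≤ -α / 2 := hg.1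
        have hrate := mul_nonneg (inv_nonneg.2 n.cast_nonneg) (Real.log_nonneg (one_le_gnorm g))
        linarith [(abs_le.1 h).2]
    simp only [IfinN, hempty, measure_empty, iSup_const, ENNReal.log_zero]
    exact EReal.coe_mul_bot_of_pos (by positivity)
  refine le_bot_iff.1 ((iInf₂_le (-α / 2) (by linarith)).trans ?_)
  rw [Ieps, limsup_congr hIfinN, limsup_const]

lemma nonneg_of_mem_Aset (hα : α ∈ Aset μ ω) : 0 ≤ α :=
  not_lt.1 fun h => hα (Ifinal_eq_bot_of_neg μ ω 0 h)

lemma Egam_subset_of_le (hγ : γ' ≤ γ) (hα : 0 ≤ α) (ε : ℝ) (n : ℕ) (x : P1) :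
    Egam ω γ α ε n x ⊆ Egam ω γ' α ε n x := fun _ hg =>
  ⟨hg.1, hg.2.trans (Real.exp_le_exp.2 (by nlinarith [mul_nonneg n.cast_nonneg hα]))⟩

lemma Ifinal_le_Ifinal_of_le (hγ : γ' ≤ γ) (hα : 0 ≤ α) : Ifinal μ ω γ α ≤ Ifinal μ ω γ' α :=
  iInf₂_mono fun ε _ => limsup_le_limsup <| Eventually.of_forall fun n =>
    mul_le_mul_of_nonneg_left
      (ENNReal.log_monotone <| iSup_mono fun x =>
        measure_mono (Egam_subset_of_le ω hγ hα ε n x))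
      (EReal.coe_nonneg.2 (inv_nonneg.2 n.cast_nonneg))

lemma iSup_measure_Egam_le (ν : Measure SL2) (hγ : γ' ≤ γ) (hα : 0 ≤ α) (ε : ℝ) (n : ℕ) :
    ⨆ x, ν (Egam ω γ' α ε n x)
      ≤ ENNReal.ofReal ((π + 5) * Real.exp (n * ((γ - γ') * α))) * ⨆ x, ν (Egam ω γ α ε n x) := by
  classical
  set R := Real.exp (-n * (γ' - ε) * α)
  set R' := Real.exp (-n * (γ - ε) * α)
  set E := Real.exp (n * ((γ - γ') * α))
  have hRR' : R / R' = E := by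
    rw [← Real.exp_sub]
    congr 1
    ring
  have hE : 1 ≤ E := Real.one_le_exp (mul_nonneg n.cast_nonneg (mul_nonneg (sub_nonneg.2 hγ) hα))
  refine iSup_le fun x => ?_
  obtain ⟨F, hFcard, hF⟩ := exists_finset_dP_cover x (Real.exp_pos _).le (Real.exp_pos _)
  have hcard : (F.card : ℝ≥0∞) ≤ ENNReal.ofReal ((π + 5) * E) := by
    rw [← ENNReal.ofReal_natCast]
    refine ENNReal.ofReal_le_ofReal (hFcard.trans ?_)
    rw [mul_div_assoc, hRR']
    nlinarith [pi_pos]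
  have hcover : Egam ω γ' α ε n x ⊆ ⋃ z ∈ F, Egam ω γ α ε n z := fun g hg => by
    obtain ⟨z, hz, hzg⟩ := hF _ hg.2
    exact Set.mem_biUnion hz ⟨hg.1, hzg⟩
  calc ν (Egam ω γ' α ε n x)
      ≤ ∑ z ∈ F, ν (Egam ω γ α ε n z) := (measure_mono hcover).trans (measure_biUnion_finset_le _ _)
    _ ≤ ∑ _z ∈ F, ⨆ y, ν (Egam ω γ α ε n y) := Finset.sum_le_sum fun z _ => le_iSup (fun y => ν _) z
    _ = F.card * ⨆ y, ν (Egam ω γ α ε n y) := by rw [Finset.sum_const, nsmul_eq_mul]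
    _ ≤ _ := mul_le_mul_left hcard _

lemma IfinN_le_add (hγ : γ' ≤ γ) (hα : 0 ≤ α) (ε : ℝ) {n : ℕ} (hn : n ≠ 0) :
    IfinN μ ω γ' α ε n
      ≤ (((n : ℝ)⁻¹ * Real.log (π + 5) + (γ - γ') * α : ℝ) : EReal) + IfinN μ ω γ α ε n := by
  have hlog : (n : ℝ)⁻¹ * Real.log ((π + 5) * Real.exp (n * ((γ - γ') * α)))
      = (n : ℝ)⁻¹ * Real.log (π + 5) + (γ - γ') * α := by
    rw [Real.log_mul (by positivity) (Real.exp_ne_zero _), Real.log_exp, mul_add,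
      inv_mul_cancel_left₀ (Nat.cast_ne_zero.2 hn)]
  have hinv : (0 : EReal) ≤ ((n : ℝ)⁻¹ : ℝ) := EReal.coe_nonneg.2 (inv_nonneg.2 n.cast_nonneg)
  calc IfinN μ ω γ' α ε n
      ≤ (((n : ℝ)⁻¹ : ℝ) : EReal) * (ENNReal.ofReal ((π + 5) * Real.exp (n * ((γ - γ') * α)))
          * ⨆ x, convPow μ n (Egam ω γ α ε n x)).log :=
        mul_le_mul_of_nonneg_left
          (ENNReal.log_monotone (iSup_measure_Egam_le ω _ hγ hα ε n)) hinv
    _ = _ := by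
        rw [ENNReal.log_mul_add, ENNReal.log_ofReal_of_pos (by positivity),
          EReal.left_distrib_of_nonneg_of_ne_top hinv (EReal.coe_ne_top _), ← EReal.coe_mul, hlog]
        rfl

lemma Ieps_le_Ieps_add (hγ : γ' ≤ γ) (hα : 0 ≤ α) (ε : ℝ) :
    Ieps μ ω γ' α ε ≤ Ieps μ ω γ α ε + (((γ - γ') * α : ℝ) : EReal) := by
  set c : ℕ → EReal := fun n => (((n : ℝ)⁻¹ * Real.log (π + 5) + (γ - γ') * α : ℝ) : EReal)
  have hc : limsup c atTop = (((γ - γ') * α : ℝ) : EReal) := by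
    refine Tendsto.limsup_eq (EReal.tendsto_coe.2 ?_)
    simpa using (tendsto_inv_atTop_zero.comp tendsto_natCast_atTop_atTop).mul_const
      (Real.log (π + 5)) |>.add_const ((γ - γ') * α)
  calc Ieps μ ω γ' α ε ≤ limsup (c + fun n => IfinN μ ω γ α ε n) atTop :=
        limsup_le_limsup ((eventually_ne_atTop 0).mono fun n hn => IfinN_le_add μ ω hγ hα ε hn)
    _ ≤ limsup c atTop + Ieps μ ω γ α ε :=
        EReal.limsup_add_le (.inl (hc ▸ EReal.coe_ne_bot _)) (.inl (hc ▸ EReal.coe_ne_top _))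
    _ = _ := by rw [hc, add_comm]

lemma Ifinal_le_Ifinal_add (hγ : γ' ≤ γ) (hα : 0 ≤ α) :
    Ifinal μ ω γ' α ≤ Ifinal μ ω γ α + (((γ - γ') * α : ℝ) : EReal) := by
  refine (EReal.sub_le_iff_le_add (.inl (EReal.coe_ne_bot _)) (.inl (EReal.coe_ne_top _))).1 ?_
  exact le_iInf₂ fun ε hε =>
    EReal.sub_le_of_le_add ((iInf₂_le ε hε).trans (Ieps_le_Ieps_add μ ω hγ hα ε))

end GrowthRates

theorem statement5_general (μ : Measure SL2) (ω : SL2 → P1) (α : ℝ) (hα : α ∈ Aset μ ω)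
    (γ' γ : ℝ) (h2 : γ' ≤ γ) :
    Ifinal μ ω γ α ≤ Ifinal μ ω γ' α ∧
      Ifinal μ ω γ' α ≤ Ifinal μ ω γ α + (((γ - γ') * α : ℝ) : EReal) := by
  have hα₀ := nonneg_of_mem_Aset μ ω hα
  exact ⟨Ifinal_le_Ifinal_of_le μ ω h2 hα₀, Ifinal_le_Ifinal_add μ ω h2 hα₀⟩

/-- For `α ∈ A` and `0 ≤ γ' ≤ γ ≤ 2`:
`I_γ(α) ≤ I_{γ'}(α) ≤ I_γ(α) + (γ-γ')α`. -/
theorem statement5 (μ : Measure SL2) [IsProbabilityMeasure μ]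
    (hcs : IsCompactlySupported μ)
    (ω : SL2 → P1) (hω : IsOmegaMinus ω)
    (α : ℝ) (hα : α ∈ Aset μ ω)
    (γ' γ : ℝ) (h1 : 0 ≤ γ') (h2 : γ' ≤ γ) (h3 : γ ≤ 2) :
    Ifinal μ ω γ α ≤ Ifinal μ ω γ' α ∧
      Ifinal μ ω γ' α ≤ Ifinal μ ω γ α + (((γ - γ') * α : ℝ) : EReal) :=
  statement5_general μ ω α hα γ' γ h2
end
end

section
/- Let μ be a compactly supported Borel probability measure on SL(2,ℝ) (no irreducibility assumption). Then for all t ∈ (−1, 0], the sequence (1/n) log inf_{x∈P} ∫ |gx|^t dμⁿ(g) converges as n → ∞, and its limit equals k(t). -/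
/-!
Since `|gx| ≤ |g|` and `t ≤ 0`, every `∫ |gx|^t dν` is at least `∫ |g|^t dν`. Conversely, for
`u_θ = (cos θ, sin θ)` there is a direction `θ_g` with `|g u_θ| ≥ |g| |cos (θ - θ_g)|`, so averaging
over `θ ∈ [0, π]` and exchanging the integrals (Fubini) gives
`inf_x ∫ |gx|^t dν ≤ (c_t / π) ∫ |g|^t dν` with `c_t = ∫_0^π |cos θ|^t dθ`, which is finite because
`t > -1`. Applied to `ν = μⁿ`, the two sequences of normalized logarithms differ by at most
`log (c_t / π) / n`.
-/

open MeasureTheory Filter Topology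
open scoped ENNReal

noncomputable section

open Real

def uvec (θ : ℝ) : V2 := !₂[cos θ, sin θ]

lemma norm_uvec (θ : ℝ) : ‖uvec θ‖ = 1 := by
  simp [uvec, EuclideanSpace.norm_eq, Fin.sum_univ_two]

lemma uvec_ne_zero (θ : ℝ) : uvec θ ≠ 0 :=
  ne_zero_of_norm_ne_zero (by simp [norm_uvec])

lemma continuous_uvec : Continuous uvec := by
  unfold uvec
  fun_prop

lemma inner_uvec_uvec (θ θ₀ : ℝ) : inner ℝ (uvec θ) (uvec θ₀) = cos (θ - θ₀) := by
  simp [uvec, PiLp.inner_apply, Fin.sum_univ_two, cos_sub, mul_comm]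

lemma exists_eq_norm_smul_uvec (w : V2) : ∃ θ₀, w = ‖w‖ • uvec θ₀ := by
  set z : ℂ := ⟨w 0, w 1⟩
  have hz : ‖z‖ = ‖w‖ := by
    simp [z, Complex.norm_def, Complex.normSq_mk, EuclideanSpace.norm_eq, Fin.sum_univ_two, sq]
  refine ⟨z.arg, ?_⟩
  ext i
  fin_cases i
  · simp [uvec, ← hz, Complex.norm_mul_cos_arg, z]
  · simp [uvec, ← hz, Complex.norm_mul_sin_arg, z]

lemma ContinuousLinearMap.exists_norm_eq_one_norm_apply_eq_opNorm {E F : Type*}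
    [NormedAddCommGroup E] [NormedSpace ℝ E] [FiniteDimensional ℝ E] [Nontrivial E]
    [NormedAddCommGroup F] [NormedSpace ℝ F] (A : E →L[ℝ] F) :
    ∃ v : E, ‖v‖ = 1 ∧ ‖A v‖ = ‖A‖ := by
  obtain ⟨v, hv, hmax⟩ := (isCompact_sphere (0 : E) 1).exists_isMaxOn
    (NormedSpace.sphere_nonempty.mpr zero_le_one) (continuous_norm.comp A.continuous).continuousOn
  rw [mem_sphere_zero_iff_norm] at hv
  refine ⟨v, hv, le_antisymm (A.unit_le_opNorm v hv.le) ?_⟩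
  exact A.opNorm_le_of_unit_norm (norm_nonneg _) fun u hu =>
    hmax (mem_sphere_zero_iff_norm.mpr hu)

lemma exists_opNorm_mul_abs_cos_le (A : V2 →L[ℝ] V2) :
    ∃ θ₀ : ℝ, ∀ θ, ‖A‖ * |cos (θ - θ₀)| ≤ ‖A (uvec θ)‖ := by
  -- Point `uvec θ₀` along `A† v` for a unit `v` at which `A†` attains its norm `‖A‖`.
  obtain ⟨v, hv, hAv⟩ := (ContinuousLinearMap.adjoint A).exists_norm_eq_one_norm_apply_eq_opNorm
  rw [LinearIsometryEquiv.norm_map] at hAv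
  obtain ⟨θ₀, hθ₀⟩ := exists_eq_norm_smul_uvec (ContinuousLinearMap.adjoint A v)
  refine ⟨θ₀, fun θ => ?_⟩
  calc ‖A‖ * |cos (θ - θ₀)|
      = |inner ℝ (uvec θ) (ContinuousLinearMap.adjoint A v)| := by
        rw [hθ₀, real_inner_smul_right, inner_uvec_uvec, abs_mul, abs_norm, hAv]
    _ = |inner ℝ (A (uvec θ)) v| := by rw [ContinuousLinearMap.adjoint_inner_right]
    _ ≤ ‖A (uvec θ)‖ := by simpa [hv] using abs_real_inner_le_norm (A (uvec θ)) v

def absCosRpowIntegral (t : ℝ) : ℝ := ∫ θ in (0 : ℝ)..π, |cos θ| ^ t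

lemma periodic_abs_cos_rpow (t : ℝ) : Function.Periodic (fun θ => |cos θ| ^ t) π :=
  fun θ => by simp [cos_add_pi]

lemma intervalIntegrable_abs_sin_rpow_zero_pi_div_two {t : ℝ} (ht : -1 < t) (ht0 : t ≤ 0) :
    IntervalIntegrable (fun θ => |sin θ| ^ t) volume 0 (π / 2) := by
  -- Jordan's inequality `2 / π * θ ≤ sin θ` dominates the integrand by a multiple of `θ ^ t`.
  refine ((intervalIntegral.intervalIntegrable_rpow' ht).const_mul ((2 / π) ^ t)).mono_fun'
    (continuous_sin.abs.measurable.pow_const t).aestronglyMeasurable ?_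
  rw [Set.uIoc_of_le (by positivity)]
  refine (ae_restrict_mem measurableSet_Ioc).mono fun θ ⟨hθ0, hθ⟩ => ?_
  have hsin := mul_le_sin hθ0.le hθ
  dsimp only
  rw [Real.norm_of_nonneg (by positivity), ← mul_rpow (by positivity) hθ0.le]
  exact rpow_le_rpow_of_nonpos (by positivity) (hsin.trans (le_abs_self _)) ht0

lemma intervalIntegrable_abs_cos_rpow {t : ℝ} (ht : -1 < t) (a b : ℝ) :
    IntervalIntegrable (fun θ => |cos θ| ^ t) volume a b := by
  rcases le_or_gt 0 t with ht0 | ht0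
  · exact (continuous_cos.abs.rpow_const fun _ => Or.inr ht0).intervalIntegrable a b
  have hleft : IntervalIntegrable (fun θ => |cos θ| ^ t) volume 0 (π / 2) := by
    simpa [sin_pi_div_two_sub] using
      ((intervalIntegrable_abs_sin_rpow_zero_pi_div_two ht ht0.le).comp_sub_left (π / 2)).symm
  have hright : IntervalIntegrable (fun θ => |cos θ| ^ t) volume (π / 2) π := by
    have := (hleft.comp_sub_left π).symm
    simp only [cos_pi_sub, abs_neg, sub_zero] at this
    convert this using 2
    ring
  exact (periodic_abs_cos_rpow t).intervalIntegrable₀ pi_pos.ne' (hleft.trans hright) a b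

lemma integral_abs_cos_sub_rpow (t θ₀ : ℝ) :
    ∫ θ in (0 : ℝ)..π, |cos (θ - θ₀)| ^ t = absCosRpowIntegral t := by
  rw [intervalIntegral.integral_comp_sub_right (fun θ => |cos θ| ^ t)]
  simpa [sub_eq_neg_add, absCosRpowIntegral] using
    (periodic_abs_cos_rpow t).intervalIntegral_add_eq (-θ₀) 0

lemma ae_cos_sub_ne_zero (θ₀ : ℝ) : ∀ᵐ θ : ℝ, cos (θ - θ₀) ≠ 0 := by
  have hzeros : {θ | cos (θ - θ₀) = 0} ⊆ Set.range fun k : ℤ => (2 * k + 1) * π / 2 + θ₀ := by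
    intro θ hθ
    obtain ⟨k, hk⟩ := cos_eq_zero_iff.mp hθ
    exact ⟨k, by simp only [← hk]; ring⟩
  filter_upwards [((Set.countable_range _).mono hzeros).ae_notMem volume] with θ hθ using hθ

lemma integral_norm_apply_uvec_rpow_le {A : V2 →L[ℝ] V2} (hA : A ≠ 0) {t : ℝ}
    (ht1 : -1 < t) (ht2 : t ≤ 0) :
    ∫ θ in (0 : ℝ)..π, ‖A (uvec θ)‖ ^ t ≤ ‖A‖ ^ t * absCosRpowIntegral t := by
  obtain ⟨θ₀, hθ₀⟩ := exists_opNorm_mul_abs_cos_le A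
  -- Only almost everywhere: where the cosine vanishes, `0 ^ t = 0` for `t < 0`.
  have hbound : ∀ᵐ θ : ℝ, ‖A (uvec θ)‖ ^ t ≤ ‖A‖ ^ t * |cos (θ - θ₀)| ^ t := by
    filter_upwards [ae_cos_sub_ne_zero θ₀] with θ hθ
    have : 0 < ‖A‖ * |cos (θ - θ₀)| := mul_pos (norm_pos_iff.mpr hA) (abs_pos.mpr hθ)
    rw [← mul_rpow (norm_nonneg _) (abs_nonneg _)]
    exact rpow_le_rpow_of_nonpos this (hθ₀ θ) ht2
  have hdom : IntervalIntegrable (fun θ => ‖A‖ ^ t * |cos (θ - θ₀)| ^ t) volume 0 π := by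
    simpa using
      ((intervalIntegrable_abs_cos_rpow ht1 (-θ₀) (π - θ₀)).comp_sub_right θ₀).const_mul (‖A‖ ^ t)
  have hint : IntervalIntegrable (fun θ => ‖A (uvec θ)‖ ^ t) volume 0 π := by
    have hmeas : Measurable fun θ => ‖A (uvec θ)‖ ^ t :=
      (A.continuous.comp continuous_uvec).norm.measurable.pow_const t
    refine hdom.mono_fun' hmeas.aestronglyMeasurable (ae_restrict_of_ae ?_)
    filter_upwards [hbound] with θ hθ
    rwa [Real.norm_of_nonneg (rpow_nonneg (norm_nonneg _) t)]
  calc ∫ θ in (0 : ℝ)..π, ‖A (uvec θ)‖ ^ t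
      ≤ ∫ θ in (0 : ℝ)..π, ‖A‖ ^ t * |cos (θ - θ₀)| ^ t :=
        intervalIntegral.integral_mono_ae pi_pos.le hint hdom hbound
    _ = ‖A‖ ^ t * absCosRpowIntegral t := by
        rw [intervalIntegral.integral_const_mul, integral_abs_cos_sub_rpow]

instance : IsTopologicalGroup SL2 := Matrix.SpecialLinearGroup.topologicalGroup

instance : T2Space SL2 := inferInstanceAs (T2Space {A : Matrix (Fin 2) (Fin 2) ℝ // A.det = 1})

instance : SecondCountableTopology SL2 :=
  haveI : SecondCountableTopology (Matrix (Fin 2) (Fin 2) ℝ) :=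
    inferInstanceAs (SecondCountableTopology (Fin 2 → Fin 2 → ℝ))
  TopologicalSpace.secondCountableTopology_induced SL2 _ Subtype.val

lemma continuous_toEuclideanCLM_coe :
    Continuous fun g : SL2 => Matrix.toEuclideanCLM (𝕜 := ℝ) (g : Matrix (Fin 2) (Fin 2) ℝ) :=
  (Matrix.toEuclideanCLM (n := Fin 2) (𝕜 := ℝ)).toAlgEquiv.toLinearMap
    |>.continuous_of_finiteDimensional.comp continuous_subtype_val

lemma continuous_gvec : Continuous fun p : SL2 × V2 => gvec p.1 p.2 :=
  (continuous_toEuclideanCLM_coe.comp continuous_fst).clm_apply continuous_snd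

lemma continuous_gnorm : Continuous gnorm :=
  continuous_toEuclideanCLM_coe.norm

lemma gnorm_pos (g : SL2) : 0 < gnorm g :=
  norm_pos_iff.mpr fun h => gvec_ne_zero g (uvec_ne_zero 0) (by simp [gvec, h])

lemma gxnorm_pos (g : SL2) (x : P1) : 0 < gxnorm g x :=
  div_pos (norm_pos_iff.mpr (gvec_ne_zero g x.rep_nonzero)) (norm_pos_iff.mpr x.rep_nonzero)

lemma gxnorm_le_gnorm (g : SL2) (x : P1) : gxnorm g x ≤ gnorm g :=
  (div_le_iff₀ (norm_pos_iff.mpr x.rep_nonzero)).mpr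
    ((Matrix.toEuclideanCLM (𝕜 := ℝ) (g : Matrix (Fin 2) (Fin 2) ℝ)).le_opNorm _)

lemma gxnorm_mk (g : SL2) {v : V2} (hv : v ≠ 0) :
    gxnorm g (Projectivization.mk ℝ v hv) = ‖gvec g v‖ / ‖v‖ := by
  obtain ⟨a, ha⟩ := (Projectivization.mk_eq_mk_iff' ℝ _ _ (Projectivization.rep_nonzero _) hv).mp
    (Projectivization.mk_rep (Projectivization.mk ℝ v hv))
  have ha0 : a ≠ 0 := by rintro rfl; exact (Projectivization.mk ℝ v hv).rep_nonzero (by simp [← ha])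
  rw [gxnorm, ← ha]
  simp only [gvec, map_smul, norm_smul]
  exact mul_div_mul_left _ _ (norm_ne_zero_iff.mpr ha0)

lemma continuous_gnorm_rpow (t : ℝ) : Continuous fun g => gnorm g ^ t :=
  continuous_gnorm.rpow_const fun g => Or.inl (gnorm_pos g).ne'

lemma continuous_gxnorm_rpow (x : P1) (t : ℝ) : Continuous fun g => gxnorm g x ^ t :=
  ((continuous_gvec.comp (Continuous.prodMk_left x.rep)).norm.div_const _).rpow_const
    fun g => Or.inl (gxnorm_pos g x).ne'

instance (μ : Measure SL2) [IsProbabilityMeasure μ] (n : ℕ) :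
    IsProbabilityMeasure (convPow μ n) := by
  induction n with
  | zero => rw [convPow]; infer_instance
  | succ n ih => rw [convPow]; exact Measure.isProbabilityMeasure_map measurable_mul.aemeasurable

open Pointwise in
lemma IsCompactlySupported.map_mul_prod {ν μ : Measure SL2} [SFinite ν] [SFinite μ]
    (hν : IsCompactlySupported ν) (hμ : IsCompactlySupported μ) :
    IsCompactlySupported (Measure.map (fun p : SL2 × SL2 => p.1 * p.2) (ν.prod μ)) := by
  obtain ⟨K, hK, hνK⟩ := hν
  obtain ⟨L, hL, hμL⟩ := hμ
  refine ⟨K * L, hK.mul hL, ?_⟩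
  rw [Measure.map_apply measurable_mul (hK.mul hL).isClosed.measurableSet.compl]
  have hsub : (fun p : SL2 × SL2 => p.1 * p.2) ⁻¹' (K * L)ᶜ ⊆ (K ×ˢ L)ᶜ :=
    fun p hp hpKL => hp (Set.mul_mem_mul hpKL.1 hpKL.2)
  refine measure_mono_null hsub ?_
  rw [Set.compl_prod_eq_union]
  exact measure_union_null (by simp [hνK]) (by simp [hμL])

lemma IsCompactlySupported.convPow {μ : Measure SL2} [IsProbabilityMeasure μ]
    (hμ : IsCompactlySupported μ) (n : ℕ) : IsCompactlySupported (convPow μ n) := by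
  induction n with
  | zero => exact ⟨{1}, isCompact_singleton, by simp [_root_.convPow]⟩
  | succ n ih => exact ih.map_mul_prod hμ

lemma IsCompactlySupported.integrable_of_continuous {E : Type*} [NormedAddCommGroup E]
    {μ : Measure SL2} [IsFiniteMeasureOnCompacts μ] (hμ : IsCompactlySupported μ) {f : SL2 → E}
    (hf : Continuous f) : Integrable f μ := by
  obtain ⟨K, hK, hμK⟩ := hμ
  rw [← Measure.restrict_eq_self_of_ae_mem (mem_ae_iff.mpr hμK)]
  exact hf.continuousOn.integrableOn_compact hK

lemma integral_gnorm_rpow_pos {ν : Measure SL2} [NeZero ν] {t : ℝ}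
    (h : Integrable (fun g => gnorm g ^ t) ν) : 0 < ∫ g, gnorm g ^ t ∂ν := by
  have hpos : ∀ g, 0 < gnorm g ^ t := fun g => rpow_pos_of_pos (gnorm_pos g) t
  rw [integral_pos_iff_support_of_nonneg (fun g => (hpos g).le) h,
    Function.support_eq_univ fun g => (hpos g).ne']
  simpa using NeZero.ne ν

lemma integral_gnorm_rpow_le_integral_gxnorm_rpow {ν : Measure SL2} {t : ℝ} (ht : t ≤ 0)
    (h : Integrable (fun g => gnorm g ^ t) ν) {x : P1}
    (hx : Integrable (fun g => gxnorm g x ^ t) ν) :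
    ∫ g, gnorm g ^ t ∂ν ≤ ∫ g, gxnorm g x ^ t ∂ν :=
  integral_mono h hx fun g => rpow_le_rpow_of_nonpos (gxnorm_pos g x) (gxnorm_le_gnorm g x) ht

lemma integral_norm_gvec_uvec_rpow_le (g : SL2) {t : ℝ} (ht1 : -1 < t) (ht2 : t ≤ 0) :
    ∫ θ in (0 : ℝ)..π, ‖gvec g (uvec θ)‖ ^ t ≤ gnorm g ^ t * absCosRpowIntegral t :=
  integral_norm_apply_uvec_rpow_le (norm_pos_iff.mp (gnorm_pos g)) ht1 ht2

lemma continuous_norm_gvec_uvec_rpow (t : ℝ) :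
    Continuous fun p : ℝ × SL2 => ‖gvec p.2 (uvec p.1)‖ ^ t :=
  (continuous_gvec.comp (continuous_snd.prodMk (continuous_uvec.comp continuous_fst))).norm
    |>.rpow_const fun _ => Or.inl (norm_ne_zero_iff.mpr (gvec_ne_zero _ (uvec_ne_zero _)))

lemma integrable_norm_gvec_uvec_rpow {ν : Measure SL2} [SFinite ν] {t : ℝ}
    (ht1 : -1 < t) (ht2 : t ≤ 0) (h : Integrable (fun g => gnorm g ^ t) ν) :
    Integrable (fun p : ℝ × SL2 => ‖gvec p.2 (uvec p.1)‖ ^ t)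
      ((volume.restrict (Set.Ioc 0 π)).prod ν) := by
  have hcont := continuous_norm_gvec_uvec_rpow t
  refine (integrable_prod_iff' hcont.aestronglyMeasurable).mpr ⟨ae_of_all _ fun g => ?_, ?_⟩
  · exact (hcont.comp (continuous_id.prodMk continuous_const)).integrableOn_Icc.mono_set
      Set.Ioc_subset_Icc_self
  refine (h.mul_const (absCosRpowIntegral t)).mono'
    hcont.norm.stronglyMeasurable.integral_prod_left'.aestronglyMeasurable
    (ae_of_all _ fun g => ?_)
  have hnonneg : ∀ θ, 0 ≤ ‖gvec g (uvec θ)‖ ^ t := fun θ => rpow_nonneg (norm_nonneg _) t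
  simp only [Real.norm_of_nonneg (hnonneg _)]
  rw [Real.norm_of_nonneg (setIntegral_nonneg measurableSet_Ioc fun θ _ => hnonneg θ),
    ← intervalIntegral.integral_of_le pi_pos.le]
  exact integral_norm_gvec_uvec_rpow_le g ht1 ht2

lemma iInf_integral_gxnorm_rpow_le {ν : Measure SL2} [SFinite ν] {t : ℝ}
    (ht1 : -1 < t) (ht2 : t ≤ 0) (h : Integrable (fun g => gnorm g ^ t) ν) :
    ⨅ x : P1, ∫ g, gxnorm g x ^ t ∂ν ≤ absCosRpowIntegral t / π * ∫ g, gnorm g ^ t ∂ν := by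
  set H : ℝ × SL2 → ℝ := fun p => ‖gvec p.2 (uvec p.1)‖ ^ t
  have hH : Integrable H ((volume.restrict (Set.Ioc 0 π)).prod ν) :=
    integrable_norm_gvec_uvec_rpow ht1 ht2 h
  have hinf : ∀ θ, ⨅ x : P1, ∫ g, gxnorm g x ^ t ∂ν ≤ ∫ g, H (θ, g) ∂ν := fun θ => by
    refine (ciInf_le ⟨0, ?_⟩ (Projectivization.mk ℝ (uvec θ) (uvec_ne_zero θ))).trans_eq ?_
    · rintro _ ⟨x, rfl⟩
      exact integral_nonneg fun g => (rpow_pos_of_pos (gxnorm_pos g x) t).le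
    · simp [H, gxnorm_mk, norm_uvec]
  rw [div_mul_eq_mul_div, le_div_iff₀' pi_pos]
  calc π * ⨅ x : P1, ∫ g, gxnorm g x ^ t ∂ν
      = ∫ _ in Set.Ioc 0 π, ⨅ x : P1, ∫ g, gxnorm g x ^ t ∂ν := by simp [pi_pos.le]
    _ ≤ ∫ θ in Set.Ioc 0 π, ∫ g, H (θ, g) ∂ν :=
        setIntegral_mono (integrableOn_const (by simp)) hH.integral_prod_left hinf
    _ = ∫ g, (∫ θ in Set.Ioc 0 π, H (θ, g)) ∂ν := integral_integral_swap hH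
    _ ≤ ∫ g, absCosRpowIntegral t * gnorm g ^ t ∂ν := by
        refine integral_mono_of_nonneg (ae_of_all _ fun g => ?_) (h.const_mul _)
          (ae_of_all _ fun g => ?_)
        · exact integral_nonneg fun θ => rpow_nonneg (norm_nonneg _) t
        · dsimp only
          rw [← intervalIntegral.integral_of_le pi_pos.le, mul_comm]
          exact integral_norm_gvec_uvec_rpow_le g ht1 ht2
    _ = absCosRpowIntegral t * ∫ g, gnorm g ^ t ∂ν := integral_const_mul _ _

lemma tendsto_inv_mul_log_of_le_of_le_mul {a b : ℕ → ℝ} {C L : ℝ} (ha : ∀ n, 0 < a n)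
    (hab : ∀ n, a n ≤ b n) (hbC : ∀ n, b n ≤ C * a n)
    (h : Tendsto (fun n : ℕ => (n : ℝ)⁻¹ * log (a n)) atTop (𝓝 L)) :
    Tendsto (fun n : ℕ => (n : ℝ)⁻¹ * log (b n)) atTop (𝓝 L) := by
  have hC : 0 < C := pos_of_mul_pos_left ((ha 0).trans_le ((hab 0).trans (hbC 0))) (ha 0).le
  have hupper :
      Tendsto (fun n : ℕ => (n : ℝ)⁻¹ * log (a n) + (n : ℝ)⁻¹ * log C) atTop (𝓝 L) := by
    simpa using h.add (tendsto_inv_atTop_nhds_zero_nat.mul_const (log C))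
  refine tendsto_of_tendsto_of_tendsto_of_le_of_le h hupper (fun n => ?_) (fun n => ?_)
  · exact mul_le_mul_of_nonneg_left (log_le_log (ha n) (hab n)) (by positivity)
  · calc (n : ℝ)⁻¹ * log (b n) ≤ (n : ℝ)⁻¹ * log (C * a n) := by
          gcongr
          · exact (ha n).trans_le (hab n)
          · exact hbC n
      _ = (n : ℝ)⁻¹ * log (a n) + (n : ℝ)⁻¹ * log C := by
          rw [log_mul hC.ne' (ha n).ne']; ring

/-- For `t ∈ (-1,0]` the sequence `(1/n) log inf_x ∫ |gx|^t dμⁿ(g)` converges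
to `k(t)`. -/
theorem statement11 (μ : Measure SL2) [IsProbabilityMeasure μ]
    (hcs : IsCompactlySupported μ)
    (k : ℝ → ℝ) (hk : KTendsto μ k)
    (t : ℝ) (ht1 : -1 < t) (ht2 : t ≤ 0) :
    Filter.Tendsto (fun n : ℕ =>
        (n : ℝ)⁻¹ * Real.log (⨅ x : P1, ∫ g, gxnorm g x ^ t ∂ convPow μ n))
      Filter.atTop (nhds (k t)) := by
  have hint : ∀ n, Integrable (fun g => gnorm g ^ t) (convPow μ n) := fun n =>
    (hcs.convPow n).integrable_of_continuous (continuous_gnorm_rpow t)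
  refine tendsto_inv_mul_log_of_le_of_le_mul (fun n => integral_gnorm_rpow_pos (hint n))
    (fun n => le_ciInf fun x => ?_) (fun n => iInf_integral_gxnorm_rpow_le ht1 ht2 (hint n))
    (hk t)
  exact integral_gnorm_rpow_le_integral_gxnorm_rpow ht2 (hint n)
    ((hcs.convPow n).integrable_of_continuous (continuous_gxnorm_rpow x t))
end
end
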